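/- arXiv:2104.00257 — 2 statements merged into one kernel-verified Lean document; each statement's English description precedes it below -/
import Mathlib

section
/- Let n ≥ k ≥ 1. Suppose A, B ∈ ℂ^{n×n} are Hermitian, B is positive definite, with joint eigen-decomposition Uᴴ A U = diag(λ₁,…,λₙ), Uᴴ B U = Iₙ where U is invertible and λ₁ ≤ … ≤ λₙ, and suppose D ∈ ℂ^{k×k} is Hermitian with unitary eigen-decomposition Qᴴ D Q = diag(ω₁,…,ω_k) where the ω_i are strictly decreasing (ω₁ > ω₂ > … > ω_k), all nonzero, with ω_i > 0 for i ≤ ℓ and ω_i < 0 for i > ℓ. If X_opt ∈ ℂ^{n×k} satisfies X_optᴴ B X_opt = I_k and trace(D X_optᴴ A X_opt) = Σ_{i=1}^{ℓ} ω_i λ_i + Σ_{i=ℓ+1}^{k} ω_i λ_{i+n−k} (i.e., X_opt is a minimizer of trace(D Xᴴ A X) subject to Xᴴ B X = I_k), then (X_opt Q)ᴴ A (X_opt Q) = diag(λ₁, λ₂, …, λ_ℓ, λ_{n−k+ℓ+1}, …, λ_n). -/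
open Matrix BigOperators
open scoped ComplexOrder

/-!
Put `W = Uᴴ B X Q`. Then `U W = X Q`, so `Wᴴ W = 1` and `(X Q)ᴴ A (X Q) = Wᴴ Λ W`, and the weights
`P t j = |W t j|²` have unit column sums and row sums at most one. With `σ j = j` for `j < ℓ` and
`σ j = j + n - k` otherwise, `trace (D Xᴴ A X) - ∑ ω_j λ_{σ j} = ∑ ω_j e_j`, where
`e_j = ∑_t λ_t P t j - λ_{σ j}`. By Ky Fan's inequality the head sums `∑_{j ≤ i} e_j` (`i < ℓ`) are
nonnegative and the tail sums `∑_{j ≥ i} e_j` (`ℓ ≤ i`) are nonpositive. Since `ω` decreases and is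
positive on the head and negative on the tail, Abel summation writes `∑ ω_j e_j` as a positive
combination of the head sums and the negated tail sums, so at a minimizer they all vanish.
Equality in Ky Fan's inequality at the pivot `λ_{σ j}` forces `P t j = 0` unless
`λ_t = λ_{σ j}`; hence `Λ W = W diag(λ ∘ σ)` and `Wᴴ Λ W = diag(λ ∘ σ)`.
-/

open Finset

section Abel

variable {α : Type*} [LinearOrder α]

theorem sum_mul_nonneg_of_partial_sums_nonneg (s : Finset α) (v u : α → ℝ)
    (hv : StrictAntiOn v s) (hv0 : ∀ i ∈ s, 0 < v i)
    (hu : ∀ i ∈ s, 0 ≤ ∑ j ∈ s with j ≤ i, u j) :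
    0 ≤ ∑ i ∈ s, v i * u i ∧ (∑ i ∈ s, v i * u i = 0 →
      ∀ i, ∑ j ∈ s with j ≤ i, u j = 0 ∧ ∑ j ∈ s with j < i, u j = 0) := by
  classical
  induction s using Finset.induction_on_max generalizing v with
  | empty => simp
  | insert a s ha ih =>
    have has : a ∉ s := fun h => lt_irrefl a (ha a h)
    have hmem : a ∈ insert a s := mem_insert_self a s
    have hle_a : ∀ j ∈ insert a s, j ≤ a := fun j hj =>
      (mem_insert.1 hj).elim le_of_eq fun hj => (ha j hj).le
    -- One step of Abel summation: `v = (v - v a) + v a`, and `v - v a` is positive on `s`.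
    have hsplit : ∑ i ∈ insert a s, v i * u i =
        ∑ i ∈ s, (v i - v a) * u i + v a * ∑ i ∈ insert a s, u i := by
      simp only [sum_insert has, sub_mul, sum_sub_distrib, mul_add, mul_sum]
      ring
    obtain ⟨hs_nonneg, hs_eq⟩ := ih (fun i => v i - v a)
      (fun i hi j hj hij =>
        sub_lt_sub_right (hv (mem_insert_of_mem hi) (mem_insert_of_mem hj) hij) _)
      (fun i hi => sub_pos.2 (hv (mem_insert_of_mem hi) hmem (ha i hi)))
      (fun i hi => by
        have := hu i (mem_insert_of_mem hi)
        rwa [filter_insert, if_neg (ha i hi).not_ge] at this)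
    have htop : 0 ≤ v a * ∑ i ∈ insert a s, u i := by
      have := hu a hmem
      rw [filter_true_of_mem hle_a] at this
      exact mul_nonneg (hv0 a hmem).le this
    refine ⟨hsplit ▸ add_nonneg hs_nonneg htop, fun hz i => ?_⟩
    have hs : ∑ i ∈ s, (v i - v a) * u i = 0 := by linarith
    have hall : ∑ i ∈ insert a s, u i = 0 :=
      (mul_eq_zero.1 (by linarith : v a * ∑ i ∈ insert a s, u i = 0)).resolve_left
        (hv0 a hmem).ne'
    constructor
    · by_cases hai : a ≤ i
      · rw [filter_true_of_mem fun j hj => (hle_a j hj).trans hai, hall]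
      · rw [filter_insert, if_neg hai]
        exact (hs_eq hs i).1
    · by_cases hai : a < i
      · rw [filter_true_of_mem fun j hj => (hle_a j hj).trans_lt hai, hall]
      · rw [filter_insert, if_neg hai]
        exact (hs_eq hs i).2

theorem sum_mul_nonneg_of_tail_sums_nonpos (s : Finset α) (v u : α → ℝ)
    (hv : StrictAntiOn v s) (hv0 : ∀ i ∈ s, v i < 0)
    (hu : ∀ i ∈ s, ∑ j ∈ s with i ≤ j, u j ≤ 0) :
    0 ≤ ∑ i ∈ s, v i * u i ∧ (∑ i ∈ s, v i * u i = 0 →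
      ∀ i, ∑ j ∈ s with i ≤ j, u j = 0 ∧ ∑ j ∈ s with i < j, u j = 0) := by
  have h := sum_mul_nonneg_of_partial_sums_nonneg (s.map OrderDual.toDual.toEmbedding)
    (fun i => -v (OrderDual.ofDual i)) (fun i => -u (OrderDual.ofDual i))
    (by
      intro i hi j hj hij
      simp only [coe_map, Set.mem_image, mem_coe] at hi hj
      obtain ⟨i, hi, rfl⟩ := hi
      obtain ⟨j, hj, rfl⟩ := hj
      exact neg_lt_neg (hv hj hi hij))
    (by simpa using fun i hi => hv0 i hi)
    (by simpa [filter_map, sum_neg_distrib] using hu)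
  simp only [sum_map, filter_map, Equiv.coe_toEmbedding, OrderDual.ofDual_toDual, neg_mul_neg,
    sum_neg_distrib, neg_eq_zero] at h
  exact ⟨h.1, fun hz i => by simpa using h.2 hz (OrderDual.toDual i)⟩

end Abel

structure IsColStochasticRowSubstochastic {ι κ : Type*} [Fintype ι] [Fintype κ]
    (P : ι → κ → ℝ) : Prop where
  nonneg : ∀ t j, 0 ≤ P t j
  sum_col : ∀ j, ∑ t, P t j = 1
  sum_row_le : ∀ t, ∑ j, P t j ≤ 1

section KyFan

variable {ι κ : Type*} [Fintype ι]

def excess (lam : ι → ℝ) (P : ι → κ → ℝ) (σ : κ → ι) (j : κ) : ℝ :=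
  ∑ t, lam t * P t j - lam (σ j)

variable {lam : ι → ℝ} {P : ι → κ → ℝ}

theorem excess_neg (σ : κ → ι) (j : κ) : excess (-lam) P σ j = -excess lam P σ j := by
  simp only [excess, Pi.neg_apply, neg_mul, sum_neg_distrib]
  ring

variable {σ : κ ↪ ι} [DecidableEq ι]

-- Any `c` can serve as pivot, because `∑ t, ∑ j ∈ J, P t j = #J = #(J.map σ)`.
theorem sum_excess_eq_sum_mul (hcol : ∀ j, ∑ t, P t j = 1) (J : Finset κ) (c : ℝ) :
    ∑ j ∈ J, excess lam P σ j =
      ∑ t, (lam t - c) * (∑ j ∈ J, P t j - if t ∈ J.map σ then 1 else 0) := by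
  have hrows : ∑ t, (lam t - c) * ∑ j ∈ J, P t j = ∑ j ∈ J, (∑ t, lam t * P t j - c) := by
    simp only [mul_sum, sub_mul]
    rw [sum_comm]
    simp only [sum_sub_distrib, ← mul_sum, hcol, mul_one]
  have hmarked : ∑ t, (lam t - c) * (if t ∈ J.map σ then 1 else 0) =
      ∑ j ∈ J, (lam (σ j) - c) := by
    simp only [mul_ite, mul_one, mul_zero, sum_ite_mem, univ_inter, sum_map]
  simp only [mul_sub, sum_sub_distrib, hrows, hmarked, excess]
  ring

variable [Fintype κ] (hP : IsColStochasticRowSubstochastic P) {J : Finset κ} {c : ℝ}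
include hP

section Pivot

variable (hle : ∀ t ∈ J.map σ, lam t ≤ c) (hge : ∀ t ∉ J.map σ, c ≤ lam t)
include hle hge

theorem pivot_term_nonneg (t : ι) :
    0 ≤ (lam t - c) * (∑ j ∈ J, P t j - if t ∈ J.map σ then 1 else 0) := by
  by_cases ht : t ∈ J.map σ
  · have hrow : ∑ j ∈ J, P t j ≤ 1 :=
      (sum_le_univ_sum_of_nonneg (hP.nonneg t)).trans (hP.sum_row_le t)
    rw [if_pos ht]
    exact mul_nonneg_of_nonpos_of_nonpos (sub_nonpos.2 (hle t ht)) (sub_nonpos.2 hrow)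
  · rw [if_neg ht, sub_zero]
    exact mul_nonneg (sub_nonneg.2 (hge t ht)) (sum_nonneg fun j _ => hP.nonneg t j)

theorem sum_excess_nonneg : 0 ≤ ∑ j ∈ J, excess lam P σ j := by
  rw [sum_excess_eq_sum_mul hP.sum_col J c]
  exact sum_nonneg fun t _ => pivot_term_nonneg hP hle hge t

theorem sum_eq_one_or_zero_of_sum_excess_eq_zero (h : ∑ j ∈ J, excess lam P σ j = 0) (t : ι) :
    (lam t < c → ∑ j ∈ J, P t j = 1) ∧ (c < lam t → ∑ j ∈ J, P t j = 0) := by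
  rw [sum_excess_eq_sum_mul hP.sum_col J c] at h
  have hterm := (sum_eq_zero_iff_of_nonneg fun t _ => pivot_term_nonneg hP hle hge t).1 h t
    (mem_univ t)
  constructor
  · intro hlt
    have ht : t ∈ J.map σ := by_contra fun ht => (hge t ht).not_gt hlt
    rw [if_pos ht] at hterm
    linarith [(mul_eq_zero.1 hterm).resolve_left (sub_ne_zero.2 hlt.ne)]
  · intro hgt
    have ht : t ∉ J.map σ := fun ht => (hle t ht).not_gt hgt
    rw [if_neg ht] at hterm
    linarith [(mul_eq_zero.1 hterm).resolve_left (sub_ne_zero.2 hgt.ne')]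

end Pivot

theorem apply_eq_zero_of_sum_excess_eq_zero [DecidableEq κ] {i : κ} (hi : i ∉ J)
    (hle : ∀ t ∈ (insert i J).map σ, lam t ≤ c) (hge : ∀ t ∉ J.map σ, c ≤ lam t)
    (hJ : ∑ j ∈ J, excess lam P σ j = 0) (hiJ : ∑ j ∈ insert i J, excess lam P σ j = 0)
    {t : ι} (ht : lam t ≠ c) : P t i = 0 := by
  have hsub : J.map σ ⊆ (insert i J).map σ := map_subset_map.2 (subset_insert i J)
  have hrow := (sum_le_univ_sum_of_nonneg (s := insert i J) (hP.nonneg t)).trans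
    (hP.sum_row_le t)
  rw [sum_insert hi] at hrow
  rcases ht.lt_or_gt with hlt | hgt
  · have hJt := (sum_eq_one_or_zero_of_sum_excess_eq_zero hP
      (fun t ht => hle t (hsub ht)) hge hJ t).1 hlt
    linarith [hP.nonneg t i]
  · have hiJt := (sum_eq_one_or_zero_of_sum_excess_eq_zero hP
      hle (fun t ht => hge t fun h => ht (hsub h)) hiJ t).2 hgt
    rw [sum_insert hi] at hiJt
    linarith [hP.nonneg t i, sum_nonneg fun j (_ : j ∈ J) => hP.nonneg t j]

end KyFan

section HeadTail

variable {k n : ℕ} (hkn : k ≤ n) (ℓ : ℕ)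

-- The `σ` of the header (indices are `0`-based).
def headTail : Fin k ↪o Fin n :=
  OrderEmbedding.ofStrictMono
    (fun i => if (i : ℕ) < ℓ then Fin.castLE hkn i else ⟨i + n - k, by omega⟩)
    (fun i j hij => by
      rw [Fin.lt_def] at hij
      dsimp only
      split_ifs <;> simp only [Fin.lt_def, Fin.val_castLE] <;> omega)

variable {hkn ℓ}

theorem val_headTail_of_lt {i : Fin k} (hi : (i : ℕ) < ℓ) : (headTail hkn ℓ i : ℕ) = i := by
  simp [headTail, OrderEmbedding.ofStrictMono, hi]

theorem val_headTail_of_le {i : Fin k} (hi : ℓ ≤ (i : ℕ)) :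
    (headTail hkn ℓ i : ℕ) = i + n - k := by
  simp [headTail, OrderEmbedding.ofStrictMono, hi.not_gt]

theorem mem_map_Iio_headTail {i : Fin k} (hi : (i : ℕ) < ℓ) {t : Fin n}
    (ht : t < headTail hkn ℓ i) : t ∈ (Iio i).map (headTail hkn ℓ).toEmbedding := by
  rw [Fin.lt_def, val_headTail_of_lt hi] at ht
  refine mem_map.2 ⟨⟨t, by omega⟩, mem_Iio.2 (Fin.lt_def.2 ht), Fin.ext ?_⟩
  exact val_headTail_of_lt (by simp only; omega)

theorem mem_map_Ioi_headTail {i : Fin k} (hi : ℓ ≤ (i : ℕ)) {t : Fin n}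
    (ht : headTail hkn ℓ i < t) : t ∈ (Ioi i).map (headTail hkn ℓ).toEmbedding := by
  rw [Fin.lt_def, val_headTail_of_le hi] at ht
  refine mem_map.2 ⟨⟨t + k - n, by omega⟩, mem_Ioi.2 (Fin.lt_def.2 (by simp only; omega)),
    Fin.ext ?_⟩
  rw [RelEmbedding.coe_toEmbedding, val_headTail_of_le (by simp only; omega)]
  simp only
  omega

end HeadTail

section Minimizer

variable {k n ℓ : ℕ} {hkn : k ≤ n} {lam : Fin n → ℝ} {P : Fin n → Fin k → ℝ}

local notation "σ" => RelEmbedding.toEmbedding (headTail hkn ℓ)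

theorem lam_le_of_mem_map_Iic (hlam : Monotone lam) {i : Fin k} {t : Fin n}
    (ht : t ∈ (Iic i).map σ) : lam t ≤ lam (σ i) := by
  obtain ⟨j, hj, rfl⟩ := mem_map.1 ht
  exact hlam ((headTail hkn ℓ).monotone (mem_Iic.1 hj))

theorem lam_le_of_mem_map_Ici (hlam : Monotone lam) {i : Fin k} {t : Fin n}
    (ht : t ∈ (Ici i).map σ) : lam (σ i) ≤ lam t := by
  obtain ⟨j, hj, rfl⟩ := mem_map.1 ht
  exact hlam ((headTail hkn ℓ).monotone (mem_Ici.1 hj))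

theorem lam_le_of_notMem_map_of_Iio_subset (hlam : Monotone lam) {i : Fin k}
    (hi : (i : ℕ) < ℓ) {J : Finset (Fin k)} (hJ : Iio i ⊆ J) {t : Fin n} (ht : t ∉ J.map σ) :
    lam (σ i) ≤ lam t :=
  not_lt.1 fun h => ht (map_subset_map.2 hJ (mem_map_Iio_headTail hi (hlam.reflect_lt h)))

theorem lam_le_of_notMem_map_of_Ioi_subset (hlam : Monotone lam) {i : Fin k}
    (hi : ℓ ≤ (i : ℕ)) {J : Finset (Fin k)} (hJ : Ioi i ⊆ J) {t : Fin n} (ht : t ∉ J.map σ) :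
    lam t ≤ lam (σ i) :=
  not_lt.1 fun h => ht (map_subset_map.2 hJ (mem_map_Ioi_headTail hi (hlam.reflect_lt h)))

variable (hlam : Monotone lam) (hP : IsColStochasticRowSubstochastic P)
include hlam hP

theorem sum_Iic_excess_nonneg {i : Fin k} (hi : (i : ℕ) < ℓ) :
    0 ≤ ∑ j ∈ Iic i, excess lam P σ j :=
  sum_excess_nonneg hP (fun _ => lam_le_of_mem_map_Iic hlam)
    (fun _ => lam_le_of_notMem_map_of_Iio_subset hlam hi Iio_subset_Iic_self)

theorem sum_Ici_excess_nonpos {i : Fin k} (hi : ℓ ≤ (i : ℕ)) :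
    ∑ j ∈ Ici i, excess lam P σ j ≤ 0 := by
  have := sum_excess_nonneg (lam := -lam) hP (c := -lam (σ i))
    (fun _ ht => neg_le_neg (lam_le_of_mem_map_Ici hlam ht))
    (fun _ ht => neg_le_neg (lam_le_of_notMem_map_of_Ioi_subset hlam hi Ioi_subset_Ici_self ht))
  simp only [excess_neg, sum_neg_distrib, neg_nonneg] at this
  exact this

theorem apply_eq_zero_of_sum_Iio_Iic_excess_eq_zero {i : Fin k} (hi : (i : ℕ) < ℓ)
    (hIio : ∑ j ∈ Iio i, excess lam P σ j = 0) (hIic : ∑ j ∈ Iic i, excess lam P σ j = 0)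
    {t : Fin n} (ht : lam t ≠ lam (σ i)) : P t i = 0 :=
  apply_eq_zero_of_sum_excess_eq_zero hP notMem_Iio_self
    (fun _ h => lam_le_of_mem_map_Iic hlam (Iio_insert i ▸ h))
    (fun _ => lam_le_of_notMem_map_of_Iio_subset hlam hi subset_rfl)
    hIio ((Iio_insert i).symm ▸ hIic) ht

theorem apply_eq_zero_of_sum_Ioi_Ici_excess_eq_zero {i : Fin k} (hi : ℓ ≤ (i : ℕ))
    (hIoi : ∑ j ∈ Ioi i, excess lam P σ j = 0) (hIci : ∑ j ∈ Ici i, excess lam P σ j = 0)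
    {t : Fin n} (ht : lam t ≠ lam (σ i)) : P t i = 0 :=
  apply_eq_zero_of_sum_excess_eq_zero (lam := -lam) (c := -lam (σ i)) hP notMem_Ioi_self
    (fun _ h => neg_le_neg (lam_le_of_mem_map_Ici hlam (Ioi_insert i ▸ h)))
    (fun _ h => neg_le_neg (lam_le_of_notMem_map_of_Ioi_subset hlam hi subset_rfl h))
    (by simp only [excess_neg, sum_neg_distrib, neg_eq_zero]; exact hIoi)
    (by simp only [excess_neg, sum_neg_distrib, neg_eq_zero, Ioi_insert]; exact hIci)
    (neg_injective.ne ht)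

theorem apply_eq_zero_of_sum_mul_excess_eq_zero {ω : Fin k → ℝ} (hω : StrictAnti ω)
    (hωpos : ∀ i : Fin k, (i : ℕ) < ℓ → 0 < ω i) (hωneg : ∀ i : Fin k, ℓ ≤ (i : ℕ) → ω i < 0)
    (h : ∑ i, ω i * excess lam P σ i = 0)
    {t : Fin n} {i : Fin k} (ht : lam t ≠ lam (σ i)) : P t i = 0 := by
  set head : Finset (Fin k) := {i | (i : ℕ) < ℓ}
  set tail : Finset (Fin k) := {i | ¬(i : ℕ) < ℓ}
  have hIic : ∀ i : Fin k, (i : ℕ) < ℓ → {j ∈ head | j ≤ i} = Iic i := fun i hi => by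
    ext j; simp only [head, mem_filter, mem_univ, true_and, mem_Iic, Fin.le_def]; omega
  have hIio : ∀ i : Fin k, (i : ℕ) < ℓ → {j ∈ head | j < i} = Iio i := fun i hi => by
    ext j; simp only [head, mem_filter, mem_univ, true_and, mem_Iio, Fin.lt_def]; omega
  have hIci : ∀ i : Fin k, ℓ ≤ (i : ℕ) → {j ∈ tail | i ≤ j} = Ici i := fun i hi => by
    ext j; simp only [tail, mem_filter, mem_univ, true_and, mem_Ici, Fin.le_def]; omega
  have hIoi : ∀ i : Fin k, ℓ ≤ (i : ℕ) → {j ∈ tail | i < j} = Ioi i := fun i hi => by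
    ext j; simp only [tail, mem_filter, mem_univ, true_and, mem_Ioi, Fin.lt_def]; omega
  obtain ⟨hhead, hhead_eq⟩ := sum_mul_nonneg_of_partial_sums_nonneg head ω (excess lam P σ)
    (hω.strictAntiOn _) (fun i hi => hωpos i (mem_filter.1 hi).2)
    (fun i hi => hIic i (mem_filter.1 hi).2 ▸ sum_Iic_excess_nonneg hlam hP (mem_filter.1 hi).2)
  obtain ⟨htail, htail_eq⟩ := sum_mul_nonneg_of_tail_sums_nonpos tail ω (excess lam P σ)
    (hω.strictAntiOn _) (fun i hi => hωneg i (not_lt.1 (mem_filter.1 hi).2))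
    (fun i hi => hIci i (not_lt.1 (mem_filter.1 hi).2) ▸
      sum_Ici_excess_nonpos hlam hP (not_lt.1 (mem_filter.1 hi).2))
  have hsplit := sum_filter_add_sum_filter_not univ (fun i : Fin k => (i : ℕ) < ℓ)
    fun i => ω i * excess lam P σ i
  by_cases hi : (i : ℕ) < ℓ
  · obtain ⟨hle, hlt⟩ := hhead_eq (by linarith) i
    exact apply_eq_zero_of_sum_Iio_Iic_excess_eq_zero hlam hP hi (hIio i hi ▸ hlt)
      (hIic i hi ▸ hle) ht
  · obtain ⟨hle, hlt⟩ := htail_eq (by linarith) i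
    exact apply_eq_zero_of_sum_Ioi_Ici_excess_eq_zero hlam hP (not_lt.1 hi)
      (hIoi i (not_lt.1 hi) ▸ hlt) (hIci i (not_lt.1 hi) ▸ hle) ht

end Minimizer

section Congruence

variable {m n R : Type*} [Fintype n] [CommRing R] [StarRing R]

theorem mul_conjTranspose_mul_mul_eq_self [DecidableEq n] {U B : Matrix n n R}
    (hUB : Uᴴ * B * U = 1) (V : Matrix n m R) : U * (Uᴴ * B * V) = V := by
  rw [← Matrix.mul_assoc, mul_eq_one_comm.1 hUB, Matrix.one_mul]

theorem conjTranspose_mul_mul_mul_eq_one [Fintype m] [DecidableEq m] {Q : Matrix m m R}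
    (hQ : Qᴴ * Q = 1) {B : Matrix n n R} {X : Matrix n m R} (hX : Xᴴ * B * X = 1) :
    (X * Q)ᴴ * B * (X * Q) = 1 := by
  rw [conjTranspose_mul, show Qᴴ * Xᴴ * B * (X * Q) = Qᴴ * (Xᴴ * B * X) * Q by
    simp only [Matrix.mul_assoc], hX, Matrix.mul_one, hQ]

theorem trace_mul_conjTranspose_mul_mul [Fintype m] [DecidableEq m] {Q : Matrix m m R}
    (hQ : Qᴴ * Q = 1) (D : Matrix m m R) (X : Matrix n m R) (A : Matrix n n R) :
    trace (D * (Xᴴ * A * X)) = trace (Qᴴ * D * Q * ((X * Q)ᴴ * A * (X * Q))) := by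
  have hQ' : Q * Qᴴ = 1 := mul_eq_one_comm.1 hQ
  calc trace (D * (Xᴴ * A * X))
      = trace (D * (Xᴴ * A * X) * Q * Qᴴ) := by rw [Matrix.mul_assoc _ Q, hQ', Matrix.mul_one]
    _ = trace (Qᴴ * (D * (Xᴴ * A * X) * Q)) := trace_mul_comm _ _
    _ = trace (Qᴴ * D * Q * ((X * Q)ᴴ * A * (X * Q))) := by
      simp only [conjTranspose_mul, Matrix.mul_assoc]
      rw [← Matrix.mul_assoc Q Qᴴ, hQ', Matrix.one_mul]

end Congruence

section Isometry

variable {m n : Type*} [Fintype m] [Fintype n] [DecidableEq n] {W : Matrix m n ℂ}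

theorem isColStochasticRowSubstochastic_normSq [DecidableEq m] (hW : Wᴴ * W = 1) :
    IsColStochasticRowSubstochastic fun t j => Complex.normSq (W t j) where
  nonneg _ _ := Complex.normSq_nonneg _
  sum_col j := by
    have := congr_fun (congr_fun hW j) j
    simp only [mul_apply, conjTranspose_apply, one_apply_eq, RCLike.star_def,
      ← Complex.normSq_eq_conj_mul_self] at this
    exact_mod_cast this
  sum_row_le t := by
    -- `1 - W Wᴴ` is an orthogonal projection, hence positive semidefinite.
    have hproj : (1 - W * Wᴴ)ᴴ * (1 - W * Wᴴ) = 1 - W * Wᴴ := by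
      have : W * Wᴴ * (W * Wᴴ) = W * Wᴴ := by
        rw [Matrix.mul_assoc, ← Matrix.mul_assoc Wᴴ, hW, Matrix.one_mul]
      simp only [conjTranspose_sub, conjTranspose_one, conjTranspose_mul,
        conjTranspose_conjTranspose, sub_mul, mul_sub, Matrix.one_mul, Matrix.mul_one, this]
      abel
    have := (posSemidef_conjTranspose_mul_self (1 - W * Wᴴ)).diag_nonneg (i := t)
    rw [hproj] at this
    simp only [Matrix.sub_apply, one_apply_eq, mul_apply, conjTranspose_apply, RCLike.star_def,
      Complex.mul_conj] at this
    exact_mod_cast sub_nonneg.1 this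

theorem trace_diagonal_mul_conjTranspose_mul_diagonal_mul [DecidableEq m] (ω : n → ℝ)
    (lam : m → ℝ) :
    trace (diagonal (fun i => (ω i : ℂ)) * (Wᴴ * diagonal (fun t => (lam t : ℂ)) * W)) =
      ((∑ i, ω i * ∑ t, lam t * Complex.normSq (W t i) : ℝ) : ℂ) := by
  simp only [trace, Matrix.diag, diagonal_mul, Complex.ofReal_sum, Complex.ofReal_mul, mul_sum]
  refine sum_congr rfl fun i _ => ?_
  rw [mul_apply, mul_sum]
  refine sum_congr rfl fun t _ => ?_
  rw [mul_diagonal, conjTranspose_apply, RCLike.star_def, Complex.normSq_eq_conj_mul_self]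
  ring

theorem conjTranspose_mul_diagonal_mul_eq_diagonal [DecidableEq m] (hW : Wᴴ * W = 1)
    {lam : m → ℝ} {μ : n → ℝ} (h : ∀ t j, lam t ≠ μ j → W t j = 0) :
    Wᴴ * diagonal (fun t => (lam t : ℂ)) * W = diagonal fun j => (μ j : ℂ) := by
  have hcomm : diagonal (fun t => (lam t : ℂ)) * W = W * diagonal fun j => (μ j : ℂ) := by
    ext t j
    rw [diagonal_mul, mul_diagonal]
    by_cases htj : lam t = μ j
    · rw [htj, mul_comm]
    · rw [h t j htj, mul_zero, zero_mul]
  rw [Matrix.mul_assoc, hcomm, ← Matrix.mul_assoc, hW, Matrix.one_mul]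

end Isometry

/-- Theorem 2.1(a) of the paper: with `D` nonsingular and with distinct eigenvalues,
any minimizer `X_opt` of `trace (D Xᴴ A X)` subject to `Xᴴ B X = I` satisfies
`(X_opt Q)ᴴ A (X_opt Q) = diag(λ₁,…,λ_ℓ, λ_{n-k+ℓ+1},…,λ_n)`. -/
theorem trace_min_posdef_B_minimizer
    (n k ℓ : ℕ) (hkn : k ≤ n)
    (A B : Matrix (Fin n) (Fin n) ℂ)
    (U : Matrix (Fin n) (Fin n) ℂ)
    (lam : Fin n → ℝ) (hlam : Monotone lam)
    (hUA : Uᴴ * A * U = Matrix.diagonal fun i => (lam i : ℂ))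
    (hUB : Uᴴ * B * U = 1)
    (D : Matrix (Fin k) (Fin k) ℂ)
    (Q : Matrix (Fin k) (Fin k) ℂ) (hQ : Qᴴ * Q = 1)
    (ω : Fin k → ℝ) (hω : StrictAnti ω)
    (hQD : Qᴴ * D * Q = Matrix.diagonal fun i => (ω i : ℂ))
    (hωpos : ∀ i : Fin k, (i : ℕ) < ℓ → 0 < ω i)
    (hωneg : ∀ i : Fin k, ℓ ≤ (i : ℕ) → ω i < 0)
    (Xopt : Matrix (Fin n) (Fin k) ℂ)
    (hXopt : Xoptᴴ * B * Xopt = 1)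
    (hmin : Matrix.trace (D * (Xoptᴴ * A * Xopt)) =
      ((∑ i : Fin k, ω i *
        (if (i : ℕ) < ℓ then lam (Fin.castLE hkn i)
         else lam ⟨(i : ℕ) + n - k, by have := i.isLt; omega⟩) : ℝ) : ℂ)) :
    (Xopt * Q)ᴴ * A * (Xopt * Q) =
      Matrix.diagonal fun i : Fin k =>
        ((if (i : ℕ) < ℓ then lam (Fin.castLE hkn i)
          else lam ⟨(i : ℕ) + n - k, by have := i.isLt; omega⟩ : ℝ) : ℂ) := by
  have hσ : ∀ i, lam (headTail hkn ℓ i) = if (i : ℕ) < ℓ then lam (Fin.castLE hkn i)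
      else lam ⟨(i : ℕ) + n - k, by have := i.isLt; omega⟩ := fun i => apply_ite lam _ _ _
  simp only [← hσ] at hmin ⊢
  set W := Uᴴ * B * (Xopt * Q)
  have hUW : U * W = Xopt * Q := mul_conjTranspose_mul_mul_eq_self hUB _
  have hconj : ∀ M, (Xopt * Q)ᴴ * M * (Xopt * Q) = Wᴴ * (Uᴴ * M * U) * W := fun M => by
    rw [← hUW]; simp only [conjTranspose_mul, Matrix.mul_assoc]
  have hWW : Wᴴ * W = 1 := by
    rw [← Matrix.mul_one Wᴴ, ← hUB, ← hconj, conjTranspose_mul_mul_mul_eq_one hQ hXopt]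
  rw [trace_mul_conjTranspose_mul_mul hQ, hQD, hconj, hUA,
    trace_diagonal_mul_conjTranspose_mul_diagonal_mul, Complex.ofReal_inj] at hmin
  have hexcess :
      ∑ i, ω i * excess lam (fun t j => Complex.normSq (W t j)) (headTail hkn ℓ) i = 0 := by
    simp only [excess, mul_sub, sum_sub_distrib, hmin, sub_self]
  rw [hconj, hUA]
  exact conjTranspose_mul_diagonal_mul_eq_diagonal hWW fun t i hti =>
    Complex.normSq_eq_zero.1 (apply_eq_zero_of_sum_mul_excess_eq_zero hlam
      (isColStochasticRowSubstochastic_normSq hWW) hω hωpos hωneg hexcess hti)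
end

section
/- Let n ≥ k ≥ 1. Suppose A, B ∈ ℂ^{n×n} are Hermitian, B is positive definite, with joint eigen-decomposition Uᴴ A U = diag(λ₁,…,λₙ), Uᴴ B U = Iₙ where U is invertible and λ₁ ≤ … ≤ λₙ, and suppose D ∈ ℂ^{k×k} is Hermitian with unitary eigen-decomposition Qᴴ D Q = diag(ω₁,…,ω_k) where the ω_i are strictly decreasing and nonzero, with ω_i > 0 for i ≤ ℓ and ω_i < 0 for i > ℓ. If X_opt ∈ ℂ^{n×k} satisfies X_optᴴ B X_opt = I_k and trace(D X_optᴴ A X_opt) = Σ_{i=1}^{ℓ} ω_i λ_{n+1−i} + Σ_{i=ℓ+1}^{k} ω_i λ_{k−i+1} (i.e., X_opt is a maximizer of trace(D Xᴴ A X) subject to Xᴴ B X = I_k), then (X_opt Q)ᴴ A (X_opt Q) = diag(λ_n, λ_{n−1}, …, λ_{n+1−ℓ}, λ_{k−ℓ}, …, λ₁). -/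
open Matrix BigOperators
open scoped ComplexOrder

section Helpers
open Finset


/-- Top Ky Fan-type bound with equality analysis, for substochastic weights. -/
lemma kyfan_top (n m : ℕ) (h1 : 1 ≤ m) (h2 : m ≤ n)
    (lam : ℕ → ℝ) (hlam : ∀ i j, i ≤ j → j < n → lam i ≤ lam j)
    (r : ℕ → ℝ) (hr0 : ∀ j, j < n → 0 ≤ r j) (hr1 : ∀ j, j < n → r j ≤ 1)
    (hsum : ∑ j ∈ range n, r j = m) :
    (∑ j ∈ range n, lam j * r j ≤ ∑ j ∈ range n, if n - m ≤ j then lam j else 0) ∧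
    (∑ j ∈ range n, lam j * r j = (∑ j ∈ range n, if n - m ≤ j then lam j else 0) →
      (∀ j, j < n → (∀ j', j' < n → lam j' = lam j → j' < n - m) → r j = 0) ∧
      (∀ j, j < n → (∀ j', j' < n → lam j' = lam j → n - m ≤ j') → r j = 1)) := by
  have hnm : n - m < n := by omega
  set c : ℝ := lam (n - m) with hc
  set t : ℕ → ℝ := fun j => if n - m ≤ j then (1:ℝ) else 0 with ht
  have htval : ∀ j, t j = if n - m ≤ j then (1:ℝ) else 0 := fun j => rfl
  have hfilter : Finset.filter (fun j => n - m ≤ j) (range n) = Finset.Ico (n - m) n := by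
    ext x; simp only [Finset.mem_Ico, Finset.mem_filter, Finset.mem_range]; omega
  have htsum : ∑ j ∈ range n, t j = m := by
    show ∑ j ∈ range n, (if n - m ≤ j then (1:ℝ) else 0) = m
    rw [← Finset.sum_filter, hfilter, Finset.sum_const, Nat.card_Ico, nsmul_eq_mul, mul_one]
    norm_cast; omega
  have hlamt : ∑ j ∈ range n, lam j * t j = ∑ j ∈ range n, if n - m ≤ j then lam j else 0 := by
    apply Finset.sum_congr rfl; intro j _
    rw [htval j]; by_cases h : n - m ≤ j
    · rw [if_pos h, if_pos h, mul_one]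
    · rw [if_neg h, if_neg h, mul_zero]
  -- pointwise inequality
  have key : ∀ j, j < n → lam j * (r j - t j) ≤ c * (r j - t j) := by
    intro j hj
    by_cases h : n - m ≤ j
    · have htj : t j = 1 := by rw [htval j, if_pos h]
      have h1' : r j - t j ≤ 0 := by rw [htj]; linarith [hr1 j hj]
      have : c ≤ lam j := hlam _ _ h hj
      nlinarith
    · have htj : t j = 0 := by rw [htval j, if_neg h]
      have h1' : 0 ≤ r j - t j := by rw [htj]; simpa using hr0 j hj
      have : lam j ≤ c := hlam _ _ (by omega) hnm
      nlinarith
  have hzero : ∑ j ∈ range n, (r j - t j) = 0 := by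
    rw [Finset.sum_sub_distrib, hsum, htsum]; ring
  have hbound : ∑ j ∈ range n, lam j * r j ≤ ∑ j ∈ range n, lam j * t j := by
    have h3 : ∑ j ∈ range n, (lam j * r j - lam j * t j) ≤ ∑ j ∈ range n, c * (r j - t j) := by
      apply Finset.sum_le_sum; intro j hj
      have := key j (Finset.mem_range.mp hj); linarith [this]
    rw [Finset.sum_sub_distrib, ← Finset.mul_sum, hzero] at h3
    linarith
  constructor
  · rw [← hlamt]; exact hbound
  · intro heq
    rw [← hlamt] at heq
    -- termwise equality: (c - lam j) * (r j - t j) = 0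
    have hterm : ∀ j ∈ range n, (c - lam j) * (r j - t j) = 0 := by
      have hnn : ∀ j ∈ range n, 0 ≤ (c - lam j) * (r j - t j) := by
        intro j hj
        have := key j (Finset.mem_range.mp hj); nlinarith
      have hstot : ∑ j ∈ range n, (c - lam j) * (r j - t j) = 0 := by
        have expand : ∑ j ∈ range n, (c - lam j) * (r j - t j)
            = c * ∑ j ∈ range n, (r j - t j)
              - (∑ j ∈ range n, lam j * r j - ∑ j ∈ range n, lam j * t j) := by
          rw [Finset.mul_sum, ← Finset.sum_sub_distrib, ← Finset.sum_sub_distrib]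
          apply Finset.sum_congr rfl; intro j _; ring
        rw [expand, hzero, heq, hlamt]; ring
      intro j hj
      exact (Finset.sum_eq_zero_iff_of_nonneg hnn).mp hstot j hj
    constructor
    · intro j hj hclass
      have hjlt : j < n - m := hclass j hj rfl
      have htj : t j = 0 := by rw [htval j, if_neg (by omega)]
      have hlamne : lam j ≠ c := by
        intro h
        have := hclass (n - m) hnm h.symm; omega
      have h4 := hterm j (Finset.mem_range.mpr hj)
      have h5 : r j - t j = 0 := by
        rcases mul_eq_zero.mp h4 with h | h
        · exfalso; apply hlamne; linarith
        · exact h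
      rw [htj] at h5; linarith
    · intro j hj hclass
      have hjge : n - m ≤ j := hclass j hj rfl
      have htj : t j = 1 := by rw [htval j, if_pos hjge]
      by_cases hlamne : lam j ≠ c
      · have h4 := hterm j (Finset.mem_range.mpr hj)
        have h5 : r j - t j = 0 := by
          rcases mul_eq_zero.mp h4 with h | h
          · exfalso; apply hlamne; linarith
          · exact h
        rw [htj] at h5; linarith
      · push_neg at hlamne
        -- mass argument on the class {j' : lam j' = c}
        have hclasssum : ∑ j' ∈ (range n).filter (fun j' => lam j' = c), (r j' - t j') = 0 := by
          have hrest : ∀ j' ∈ (range n).filter (fun j' => ¬ lam j' = c), r j' - t j' = 0 := by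
            intro j' hj'
            rw [Finset.mem_filter] at hj'
            have h4 := hterm j' hj'.1
            rcases mul_eq_zero.mp h4 with h | h
            · exfalso; apply hj'.2; linarith
            · exact h
          have h6 := Finset.sum_filter_add_sum_filter_not (range n) (fun j' => lam j' = c)
            (fun j' => r j' - t j')
          rw [Finset.sum_eq_zero hrest] at h6
          linarith [hzero, h6]
        -- on the class, t = 1 (every class member is ≥ n - m by hclass)
        have htone : ∀ j', j' < n → lam j' = c → t j' = 1 := by
          intro j' hj1 hj2
          have : n - m ≤ j' := hclass j' hj1 (by rw [hj2, hlamne])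
          rw [htval j', if_pos this]
        have hnonneg : ∀ j' ∈ (range n).filter (fun j' => lam j' = c), 0 ≤ t j' - r j' := by
          intro j' hj'
          rw [Finset.mem_filter, Finset.mem_range] at hj'
          rw [htone j' hj'.1 hj'.2]; linarith [hr1 j' hj'.1]
        have hz : ∀ j' ∈ (range n).filter (fun j' => lam j' = c), t j' - r j' = 0 := by
          apply (Finset.sum_eq_zero_iff_of_nonneg hnonneg).mp
          have h7 : ∑ j' ∈ (range n).filter (fun j' => lam j' = c), (t j' - r j')
              = - ∑ j' ∈ (range n).filter (fun j' => lam j' = c), (r j' - t j') := by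
            rw [← Finset.sum_neg_distrib]; apply Finset.sum_congr rfl; intro x _; ring
          rw [h7, hclasssum]; ring
        have h8 := hz j (by rw [Finset.mem_filter]; exact ⟨Finset.mem_range.mpr hj, hlamne⟩)
        rw [htj] at h8; linarith


/-- Bottom Ky Fan-type bound with equality analysis. -/
lemma kyfan_bot (n m : ℕ) (h1 : 1 ≤ m) (h2 : m ≤ n)
    (lam : ℕ → ℝ) (hlam : ∀ i j, i ≤ j → j < n → lam i ≤ lam j)
    (r : ℕ → ℝ) (hr0 : ∀ j, j < n → 0 ≤ r j) (hr1 : ∀ j, j < n → r j ≤ 1)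
    (hsum : ∑ j ∈ range n, r j = m) :
    ((∑ j ∈ range n, if j < m then lam j else 0) ≤ ∑ j ∈ range n, lam j * r j) ∧
    (∑ j ∈ range n, lam j * r j = (∑ j ∈ range n, if j < m then lam j else 0) →
      (∀ j, j < n → (∀ j', j' < n → lam j' = lam j → m ≤ j') → r j = 0) ∧
      (∀ j, j < n → (∀ j', j' < n → lam j' = lam j → j' < m) → r j = 1)) := by
  have hm1 : m - 1 < n := by omega
  set c : ℝ := lam (m - 1) with hc
  set t : ℕ → ℝ := fun j => if j < m then (1:ℝ) else 0 with ht
  have htval : ∀ j, t j = if j < m then (1:ℝ) else 0 := fun j => rfl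
  have hfilter : Finset.filter (fun j => j < m) (range n) = Finset.range m := by
    ext x; simp only [Finset.mem_filter, Finset.mem_range]; omega
  have htsum : ∑ j ∈ range n, t j = m := by
    show ∑ j ∈ range n, (if j < m then (1:ℝ) else 0) = m
    rw [← Finset.sum_filter, hfilter, Finset.sum_const, Finset.card_range, nsmul_eq_mul, mul_one]
  have hlamt : ∑ j ∈ range n, lam j * t j = ∑ j ∈ range n, if j < m then lam j else 0 := by
    apply Finset.sum_congr rfl; intro j _
    rw [htval j]; by_cases h : j < m
    · rw [if_pos h, if_pos h, mul_one]
    · rw [if_neg h, if_neg h, mul_zero]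
  have key : ∀ j, j < n → c * (r j - t j) ≤ lam j * (r j - t j) := by
    intro j hj
    by_cases h : j < m
    · have htj : t j = 1 := by rw [htval j, if_pos h]
      have h1' : r j - t j ≤ 0 := by rw [htj]; linarith [hr1 j hj]
      have : lam j ≤ c := hlam _ _ (by omega) hm1
      nlinarith
    · have htj : t j = 0 := by rw [htval j, if_neg h]
      have h1' : 0 ≤ r j - t j := by rw [htj]; simpa using hr0 j hj
      have : c ≤ lam j := hlam _ _ (by omega) hj
      nlinarith
  have hzero : ∑ j ∈ range n, (r j - t j) = 0 := by
    rw [Finset.sum_sub_distrib, hsum, htsum]; ring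
  have hbound : ∑ j ∈ range n, lam j * t j ≤ ∑ j ∈ range n, lam j * r j := by
    have h3 : ∑ j ∈ range n, c * (r j - t j) ≤ ∑ j ∈ range n, (lam j * r j - lam j * t j) := by
      apply Finset.sum_le_sum; intro j hj
      have := key j (Finset.mem_range.mp hj); linarith [this]
    rw [Finset.sum_sub_distrib, ← Finset.mul_sum, hzero] at h3
    linarith
  constructor
  · rw [← hlamt]; exact hbound
  · intro heq
    rw [← hlamt] at heq
    have hterm : ∀ j ∈ range n, (lam j - c) * (r j - t j) = 0 := by
      have hnn : ∀ j ∈ range n, 0 ≤ (lam j - c) * (r j - t j) := by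
        intro j hj
        have := key j (Finset.mem_range.mp hj); nlinarith
      have hstot : ∑ j ∈ range n, (lam j - c) * (r j - t j) = 0 := by
        have expand : ∑ j ∈ range n, (lam j - c) * (r j - t j)
            = (∑ j ∈ range n, lam j * r j - ∑ j ∈ range n, lam j * t j)
              - c * ∑ j ∈ range n, (r j - t j) := by
          rw [Finset.mul_sum, ← Finset.sum_sub_distrib, ← Finset.sum_sub_distrib]
          apply Finset.sum_congr rfl; intro j _; ring
        rw [expand, hzero, heq, hlamt]; ring
      intro j hj
      exact (Finset.sum_eq_zero_iff_of_nonneg hnn).mp hstot j hj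
    constructor
    · intro j hj hclass
      have hjge : m ≤ j := hclass j hj rfl
      have htj : t j = 0 := by rw [htval j, if_neg (by omega)]
      have hlamne : lam j ≠ c := by
        intro h
        have := hclass (m - 1) hm1 h.symm; omega
      have h4 := hterm j (Finset.mem_range.mpr hj)
      have h5 : r j - t j = 0 := by
        rcases mul_eq_zero.mp h4 with h | h
        · exfalso; apply hlamne; linarith
        · exact h
      rw [htj] at h5; linarith
    · intro j hj hclass
      have hjlt : j < m := hclass j hj rfl
      have htj : t j = 1 := by rw [htval j, if_pos hjlt]
      by_cases hlamne : lam j ≠ c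
      · have h4 := hterm j (Finset.mem_range.mpr hj)
        have h5 : r j - t j = 0 := by
          rcases mul_eq_zero.mp h4 with h | h
          · exfalso; apply hlamne; linarith
          · exact h
        rw [htj] at h5; linarith
      · push_neg at hlamne
        have hclasssum : ∑ j' ∈ (range n).filter (fun j' => lam j' = c), (r j' - t j') = 0 := by
          have hrest : ∀ j' ∈ (range n).filter (fun j' => ¬ lam j' = c), r j' - t j' = 0 := by
            intro j' hj'
            rw [Finset.mem_filter] at hj'
            have h4 := hterm j' hj'.1
            rcases mul_eq_zero.mp h4 with h | h
            · exfalso; apply hj'.2; linarith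
            · exact h
          have h6 := Finset.sum_filter_add_sum_filter_not (range n) (fun j' => lam j' = c)
            (fun j' => r j' - t j')
          rw [Finset.sum_eq_zero hrest] at h6
          linarith [hzero, h6]
        have htone : ∀ j', j' < n → lam j' = c → t j' = 1 := by
          intro j' hj1 hj2
          have : j' < m := hclass j' hj1 (by rw [hj2, hlamne])
          rw [htval j', if_pos this]
        have hnonneg : ∀ j' ∈ (range n).filter (fun j' => lam j' = c), 0 ≤ t j' - r j' := by
          intro j' hj'
          rw [Finset.mem_filter, Finset.mem_range] at hj'
          rw [htone j' hj'.1 hj'.2]; linarith [hr1 j' hj'.1]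
        have hz : ∀ j' ∈ (range n).filter (fun j' => lam j' = c), t j' - r j' = 0 := by
          apply (Finset.sum_eq_zero_iff_of_nonneg hnonneg).mp
          have h7 : ∑ j' ∈ (range n).filter (fun j' => lam j' = c), (t j' - r j')
              = - ∑ j' ∈ (range n).filter (fun j' => lam j' = c), (r j' - t j') := by
            rw [← Finset.sum_neg_distrib]; apply Finset.sum_congr rfl; intro x _; ring
          rw [h7, hclasssum]; ring
        have h8 := hz j (by rw [Finset.mem_filter]; exact ⟨Finset.mem_range.mpr hj, hlamne⟩)
        rw [htj] at h8; linarith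

lemma tele (g : ℕ → ℝ) (a b : ℕ) (h : a ≤ b) :
    ∑ m ∈ Finset.Ico a b, (g m - g (m + 1)) = g a - g b := by
  rw [Finset.sum_Ico_eq_sum_range]
  have h2 := Finset.sum_range_sub' (fun t => g (a + t)) (b - a)
  simp only [Nat.add_zero] at h2
  rw [Nat.add_sub_cancel' h] at h2
  rw [← h2]
  apply Finset.sum_congr rfl
  intro t _
  rfl


lemma core (n k ℓ : ℕ) (hk : 1 ≤ k) (hkn : k ≤ n) (hℓ : ℓ ≤ k)
    (lam : ℕ → ℝ) (hlam : ∀ i j, i ≤ j → j < n → lam i ≤ lam j)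
    (ω : ℕ → ℝ) (hω : ∀ i j, i < j → j < k → ω j < ω i)
    (hωpos : ∀ i, i < ℓ → 0 < ω i) (hωneg : ∀ i, ℓ ≤ i → i < k → ω i < 0)
    (p : ℕ → ℕ → ℝ) (hp0 : ∀ j i, 0 ≤ p j i)
    (hcol : ∀ i, i < k → ∑ j ∈ range n, p j i = 1)
    (hrow : ∀ j, j < n → ∑ i ∈ range k, p j i ≤ 1)
    (μ : ℕ → ℝ) (hμ : ∀ i, i < k → μ i = if i < ℓ then lam (n - 1 - i) else lam (k - 1 - i))
    (hmax : ∑ i ∈ range k, ω i * (∑ j ∈ range n, lam j * p j i)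
          = ∑ i ∈ range k, ω i * μ i) :
    ∀ j, j < n → ∀ i, i < k → p j i ≠ 0 → lam j = μ i := by
  set d : ℕ → ℝ := fun i => ∑ j ∈ range n, lam j * p j i with hd
  set e : ℕ → ℝ := fun i => μ i - d i with he
  -- generic row-weight facts
  have hR0 : ∀ (s : Finset ℕ) j, 0 ≤ ∑ i ∈ s, p j i :=
    fun s j => Finset.sum_nonneg fun i _ => hp0 j i
  have hR1 : ∀ (s : Finset ℕ), s ⊆ range k → ∀ j, j < n → ∑ i ∈ s, p j i ≤ 1 := by
    intro s hs j hj
    exact le_trans (Finset.sum_le_sum_of_subset_of_nonneg hs fun i _ _ => hp0 j i) (hrow j hj)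
  have hRsum : ∀ (s : Finset ℕ), s ⊆ range k → ∑ j ∈ range n, (∑ i ∈ s, p j i) = s.card := by
    intro s hs
    rw [Finset.sum_comm]
    rw [Finset.sum_congr rfl (fun i hi => hcol i (Finset.mem_range.mp (hs hi)))]
    simp
  have hRd : ∀ (s : Finset ℕ), ∑ j ∈ range n, lam j * (∑ i ∈ s, p j i) = ∑ i ∈ s, d i := by
    intro s
    simp_rw [Finset.mul_sum]
    rw [Finset.sum_comm]
  -- top and bottom target sums
  have htop : ∀ m, m ≤ ℓ →
      (∑ j ∈ range n, if n - m ≤ j then lam j else 0) = ∑ i ∈ range m, μ i := by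
    intro m hm
    have h1 : (∑ j ∈ range n, if n - m ≤ j then lam j else 0) = ∑ j ∈ Ico (n - m) n, lam j := by
      rw [← Finset.sum_filter]
      congr 1
      ext x; simp only [Finset.mem_filter, Finset.mem_range, Finset.mem_Ico]; omega
    rw [h1, Finset.sum_Ico_eq_sum_range]
    have h2 : n - (n - m) = m := by omega
    rw [h2]
    conv_lhs => rw [← Finset.sum_range_reflect]
    apply Finset.sum_congr rfl
    intro i hi
    have hi' := Finset.mem_range.mp hi
    rw [hμ i (by omega), if_pos (by omega)]
    congr 1
    omega
  have hbot : ∀ m, ℓ ≤ m → m ≤ k →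
      (∑ j ∈ range n, if j < k - m then lam j else 0) = ∑ i ∈ Ico m k, μ i := by
    intro m hm1 hm2
    have h1 : (∑ j ∈ range n, if j < k - m then lam j else 0) = ∑ j ∈ range (k - m), lam j := by
      rw [← Finset.sum_filter]
      congr 1
      ext x; simp only [Finset.mem_filter, Finset.mem_range]; omega
    rw [h1, Finset.sum_Ico_eq_sum_range]
    have h3 : ∀ t ∈ range (k - m), μ (m + t) = lam (k - m - 1 - t) := by
      intro t ht
      have ht' := Finset.mem_range.mp ht
      rw [hμ (m + t) (by omega), if_neg (by omega)]
      congr 1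
      omega
    rw [Finset.sum_congr rfl h3, Finset.sum_range_reflect]
  -- gaps
  set G : ℕ → ℝ := fun m => ∑ i ∈ range m, e i with hG
  set H : ℕ → ℝ := fun m => ∑ i ∈ Ico m k, (d i - μ i) with hH
  have hsubtop : ∀ m, m ≤ k → range m ⊆ range k := fun m hm => Finset.range_subset_range.mpr hm
  have hsubbot : ∀ m, Ico m k ⊆ range k := by
    intro m x hx
    rw [Finset.mem_Ico] at hx
    exact Finset.mem_range.mpr hx.2
  have hkftop : ∀ m, 1 ≤ m → m ≤ ℓ →
      (0 ≤ G m) ∧ (G m = 0 →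
        (∀ j, j < n → (∀ j', j' < n → lam j' = lam j → j' < n - m) → (∑ i ∈ range m, p j i) = 0) ∧
        (∀ j, j < n → (∀ j', j' < n → lam j' = lam j → n - m ≤ j') → (∑ i ∈ range m, p j i) = 1)) := by
    intro m h1 h2
    have hcard : ((range m).card : ℝ) = m := by simp
    obtain ⟨hb, heqc⟩ := kyfan_top n m h1 (by omega) lam hlam
      (fun j => ∑ i ∈ range m, p j i) (fun j _ => hR0 _ j)
      (hR1 _ (hsubtop m (le_trans h2 hℓ))) (by rw [hRsum _ (hsubtop m (le_trans h2 hℓ))]; simp)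
    have hGm : G m = (∑ j ∈ range n, if n - m ≤ j then lam j else 0)
        - ∑ j ∈ range n, lam j * (∑ i ∈ range m, p j i) := by
      show (∑ i ∈ range m, (μ i - d i)) = _
      rw [htop m h2, hRd, Finset.sum_sub_distrib]
    constructor
    · rw [hGm]; linarith
    · intro h0
      apply heqc
      rw [hGm] at h0
      linarith
  have hkfbot : ∀ m, ℓ ≤ m → m < k →
      (0 ≤ H m) ∧ (H m = 0 →
        (∀ j, j < n → (∀ j', j' < n → lam j' = lam j → k - m ≤ j') → (∑ i ∈ Ico m k, p j i) = 0) ∧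
        (∀ j, j < n → (∀ j', j' < n → lam j' = lam j → j' < k - m) → (∑ i ∈ Ico m k, p j i) = 1)) := by
    intro m h1 h2
    obtain ⟨hb, heqc⟩ := kyfan_bot n (k - m) (by omega) (by omega) lam hlam
      (fun j => ∑ i ∈ Ico m k, p j i) (fun j _ => hR0 _ j)
      (hR1 _ (hsubbot m)) (by rw [hRsum _ (hsubbot m), Nat.card_Ico])
    have hHm : H m = (∑ j ∈ range n, lam j * (∑ i ∈ Ico m k, p j i))
        - (∑ j ∈ range n, if j < k - m then lam j else 0) := by
      show (∑ i ∈ Ico m k, (d i - μ i)) = _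
      rw [hbot m h1 (le_of_lt h2), hRd, Finset.sum_sub_distrib]
    constructor
    · rw [hHm]; linarith
    · intro h0
      apply heqc
      rw [hHm] at h0
      linarith
  -- Abel summation
  set ν : ℕ → ℝ := fun i => if i < ℓ then ω i else 0 with hν
  set cp : ℕ → ℝ := fun m => ν m - ν (m + 1) with hcp
  set cm : ℕ → ℝ := fun m => if m = ℓ then -ω ℓ else ω (m - 1) - ω m with hcm
  have habelpos : ∑ i ∈ range ℓ, ω i * e i = ∑ m ∈ range ℓ, cp m * G (m + 1) := by
    have hων : ∀ i, i < ℓ → ω i = ∑ m ∈ Ico i ℓ, cp m := by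
      intro i hi
      rw [tele ν i ℓ (le_of_lt hi)]
      have hν1 : ν i = ω i := if_pos hi
      have hν2 : ν ℓ = 0 := if_neg (lt_irrefl ℓ)
      rw [hν1, hν2, sub_zero]
    calc ∑ i ∈ range ℓ, ω i * e i
        = ∑ i ∈ range ℓ, ∑ m ∈ Ico i ℓ, cp m * e i := by
          apply Finset.sum_congr rfl
          intro i hi
          rw [hων i (Finset.mem_range.mp hi), Finset.sum_mul]
      _ = ∑ i ∈ range ℓ, ∑ m ∈ range ℓ, (if i ≤ m then cp m * e i else 0) := by
          apply Finset.sum_congr rfl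
          intro i _
          rw [← Finset.sum_filter]
          congr 1
          ext x; simp only [Finset.mem_Ico, Finset.mem_filter, Finset.mem_range]; omega
      _ = ∑ m ∈ range ℓ, ∑ i ∈ range ℓ, (if i ≤ m then cp m * e i else 0) := Finset.sum_comm
      _ = ∑ m ∈ range ℓ, cp m * G (m + 1) := by
          apply Finset.sum_congr rfl
          intro m hm
          have hm' := Finset.mem_range.mp hm
          rw [← Finset.sum_filter]
          have hf : Finset.filter (fun i => i ≤ m) (range ℓ) = range (m + 1) := by
            ext x; simp only [Finset.mem_filter, Finset.mem_range]; omega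
          rw [hf]
          show ∑ i ∈ range (m + 1), cp m * e i = cp m * ∑ i ∈ range (m + 1), e i
          rw [Finset.mul_sum]
  have habelneg : ∑ i ∈ Ico ℓ k, ω i * e i = ∑ m ∈ Ico ℓ k, cm m * H m := by
    have hωcm : ∀ i, ℓ ≤ i → i < k → ω i = - ∑ m ∈ Ico ℓ (i + 1), cm m := by
      intro i h1 h2
      rw [Finset.sum_eq_sum_Ico_succ_bot (show ℓ < i + 1 by omega)]
      have hstep : ∑ m ∈ Ico (ℓ + 1) (i + 1), cm m = ω ℓ - ω i := by
        have h3 : ∀ m ∈ Ico (ℓ + 1) (i + 1), cm m = (fun m => ω (m - 1)) m - (fun m => ω (m - 1)) (m + 1) := by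
          intro m hm
          rw [Finset.mem_Ico] at hm
          show (if m = ℓ then -ω ℓ else ω (m - 1) - ω m) = ω (m - 1) - ω (m + 1 - 1)
          rw [if_neg (by omega)]
          congr 2
        rw [Finset.sum_congr rfl h3, tele (fun m => ω (m - 1)) (ℓ + 1) (i + 1) (by omega)]
        have e1 : ℓ + 1 - 1 = ℓ := by omega
        have e2 : i + 1 - 1 = i := by omega
        simp only [e1, e2]
      rw [hstep]
      have hcml : cm ℓ = -ω ℓ := if_pos rfl
      rw [hcml]
      ring
    calc ∑ i ∈ Ico ℓ k, ω i * e i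
        = ∑ i ∈ Ico ℓ k, ∑ m ∈ Ico ℓ (i + 1), cm m * (-(e i)) := by
          apply Finset.sum_congr rfl
          intro i hi
          rw [Finset.mem_Ico] at hi
          rw [hωcm i hi.1 hi.2, neg_mul, Finset.sum_mul, ← Finset.sum_neg_distrib]
          apply Finset.sum_congr rfl
          intro m _
          ring
      _ = ∑ i ∈ Ico ℓ k, ∑ m ∈ Ico ℓ k, (if m ≤ i then cm m * (-(e i)) else 0) := by
          apply Finset.sum_congr rfl
          intro i hi
          rw [Finset.mem_Ico] at hi
          rw [← Finset.sum_filter]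
          congr 1
          ext x; simp only [Finset.mem_Ico, Finset.mem_filter]; omega
      _ = ∑ m ∈ Ico ℓ k, ∑ i ∈ Ico ℓ k, (if m ≤ i then cm m * (-(e i)) else 0) := Finset.sum_comm
      _ = ∑ m ∈ Ico ℓ k, cm m * H m := by
          apply Finset.sum_congr rfl
          intro m hm
          rw [Finset.mem_Ico] at hm
          rw [← Finset.sum_filter]
          have hf : Finset.filter (fun i => m ≤ i) (Ico ℓ k) = Ico m k := by
            ext x; simp only [Finset.mem_filter, Finset.mem_Ico]; omega
          rw [hf]
          show ∑ i ∈ Ico m k, cm m * (-(e i)) = cm m * ∑ i ∈ Ico m k, (d i - μ i)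
          rw [Finset.mul_sum]
          apply Finset.sum_congr rfl
          intro i _
          show cm m * (-(μ i - d i)) = _
          ring
  have htotal : ∑ m ∈ range ℓ, cp m * G (m + 1) + ∑ m ∈ Ico ℓ k, cm m * H m = 0 := by
    rw [← habelpos, ← habelneg, Finset.sum_range_add_sum_Ico _ hℓ]
    have : ∑ i ∈ range k, ω i * e i
        = ∑ i ∈ range k, ω i * μ i - ∑ i ∈ range k, ω i * d i := by
      rw [← Finset.sum_sub_distrib]
      apply Finset.sum_congr rfl
      intro i _
      show ω i * (μ i - d i) = _
      ring
    rw [this, ← hmax]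
    exact sub_self _
  -- positivity of coefficients
  have hcppos : ∀ m, m < ℓ → 0 < cp m := by
    intro m hm
    show 0 < ν m - ν (m + 1)
    have h1 : ν m = ω m := if_pos hm
    by_cases h : m + 1 < ℓ
    · have h2 : ν (m + 1) = ω (m + 1) := if_pos h
      rw [h1, h2, sub_pos]
      exact hω m (m + 1) (by omega) (by omega)
    · have h2 : ν (m + 1) = 0 := if_neg h
      rw [h1, h2, sub_zero]
      exact hωpos m hm
  have hcmpos : ∀ m, ℓ ≤ m → m < k → 0 < cm m := by
    intro m h1 h2
    show 0 < if m = ℓ then -ω ℓ else ω (m - 1) - ω m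
    by_cases h : m = ℓ
    · rw [if_pos h]
      have := hωneg ℓ le_rfl (by omega)
      linarith
    · rw [if_neg h, sub_pos]
      exact hω (m - 1) m (by omega) h2
  -- conclude each gap vanishes
  have hG0 : ∀ m, 1 ≤ m → m ≤ ℓ → G m = 0 := by
    have hAnn : ∀ m ∈ range ℓ, 0 ≤ cp m * G (m + 1) := by
      intro m hm
      have hm' := Finset.mem_range.mp hm
      exact mul_nonneg (le_of_lt (hcppos m hm')) ((hkftop (m + 1) (by omega) (by omega)).1)
    have hBnn : ∀ m ∈ Ico ℓ k, 0 ≤ cm m * H m := by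
      intro m hm
      rw [Finset.mem_Ico] at hm
      exact mul_nonneg (le_of_lt (hcmpos m hm.1 hm.2)) ((hkfbot m hm.1 hm.2).1)
    have hAz : ∀ m ∈ range ℓ, cp m * G (m + 1) = 0 := by
      apply (Finset.sum_eq_zero_iff_of_nonneg hAnn).mp
      have := Finset.sum_nonneg hBnn
      have := Finset.sum_nonneg hAnn
      linarith [htotal]
    intro m h1 h2
    have := hAz (m - 1) (Finset.mem_range.mpr (by omega))
    have hne : cp (m - 1) ≠ 0 := ne_of_gt (hcppos (m - 1) (by omega))
    have : G (m - 1 + 1) = 0 := by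
      rcases mul_eq_zero.mp this with h | h
      · exact absurd h hne
      · exact h
    have hmm : m - 1 + 1 = m := by omega
    rwa [hmm] at this
  have hH0 : ∀ m, ℓ ≤ m → m < k → H m = 0 := by
    have hAnn : ∀ m ∈ range ℓ, 0 ≤ cp m * G (m + 1) := by
      intro m hm
      have hm' := Finset.mem_range.mp hm
      exact mul_nonneg (le_of_lt (hcppos m hm')) ((hkftop (m + 1) (by omega) (by omega)).1)
    have hBnn : ∀ m ∈ Ico ℓ k, 0 ≤ cm m * H m := by
      intro m hm
      rw [Finset.mem_Ico] at hm
      exact mul_nonneg (le_of_lt (hcmpos m hm.1 hm.2)) ((hkfbot m hm.1 hm.2).1)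
    have hBz : ∀ m ∈ Ico ℓ k, cm m * H m = 0 := by
      apply (Finset.sum_eq_zero_iff_of_nonneg hBnn).mp
      have := Finset.sum_nonneg hBnn
      have := Finset.sum_nonneg hAnn
      linarith [htotal]
    intro m h1 h2
    have := hBz m (Finset.mem_Ico.mpr ⟨h1, h2⟩)
    have hne : cm m ≠ 0 := ne_of_gt (hcmpos m h1 h2)
    rcases mul_eq_zero.mp this with h | h
    · exact absurd h hne
    · exact h
  -- final extraction
  intro j hj i hi hp
  rcases lt_trichotomy (lam j) (μ i) with hlt | heq | hgt
  · exfalso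
    by_cases hiℓ : i < ℓ
    · -- lam j < μ i = lam (n-1-i) : use top level m = i+1
      have hμi : μ i = lam (n - 1 - i) := by rw [hμ i hi, if_pos hiℓ]
      have hE := ((hkftop (i + 1) (by omega) (by omega)).2
        (hG0 (i + 1) (by omega) (by omega))).1 j hj ?_
      · have : p j i = 0 := by
          have := (Finset.sum_eq_zero_iff_of_nonneg (fun i' _ => hp0 j i')).mp hE i
            (Finset.mem_range.mpr (by omega))
          exact this
        exact hp this
      · intro j' hj' hje
        by_contra hge
        push_neg at hge
        have h5 : lam (n - 1 - i) ≤ lam j' := hlam (n - 1 - i) j' (by omega) hj'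
        rw [hje] at h5
        rw [hμi] at hlt
        linarith
    · -- i ≥ ℓ, lam j < μ i = lam (k-1-i): use bottom level m = i+1
      push_neg at hiℓ
      have hμi : μ i = lam (k - 1 - i) := by rw [hμ i hi, if_neg (by omega)]
      have hki : 1 ≤ k - 1 - i := by
        by_contra hc
        push_neg at hc
        have : k - 1 - i = 0 := by omega
        have h5 : lam 0 ≤ lam j := hlam 0 j (by omega) hj
        rw [hμi, this] at hlt
        linarith
      have hE := ((hkfbot (i + 1) (by omega) (by omega)).2
        (hH0 (i + 1) (by omega) (by omega))).2 j hj ?_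
      · have hsum1 : ∑ i' ∈ Ico i k, p j i' = p j i + ∑ i' ∈ Ico (i + 1) k, p j i' :=
          Finset.sum_eq_sum_Ico_succ_bot (by omega) _
        have hle : ∑ i' ∈ Ico i k, p j i' ≤ 1 := hR1 _ (hsubbot i) j hj
        rw [hsum1, hE] at hle
        have := hp0 j i
        have : p j i = 0 := by linarith
        exact hp this
      · intro j' hj' hje
        by_contra hge
        push_neg at hge
        have h5 : lam (k - 1 - i) ≤ lam j' := hlam (k - 1 - i) j' (by omega) hj'
        rw [hje] at h5
        rw [hμi] at hlt
        linarith
  · exact heq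
  · exfalso
    by_cases hiℓ : i < ℓ
    · -- lam j > μ i = lam (n-1-i)
      have hμi : μ i = lam (n - 1 - i) := by rw [hμ i hi, if_pos hiℓ]
      rcases Nat.eq_zero_or_pos i with hi0 | hi0
      · have h5 : lam j ≤ lam (n - 1) := hlam j (n - 1) (by omega) (by omega)
        rw [hμi, hi0] at hgt
        simp only [Nat.sub_zero] at hgt
        linarith
      · have hE := ((hkftop i (by omega) (by omega)).2
          (hG0 i (by omega) (by omega))).2 j hj ?_
        · have hsum1 : ∑ i' ∈ range (i + 1), p j i' = ∑ i' ∈ range i, p j i' + p j i :=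
            Finset.sum_range_succ _ _
          have hle : ∑ i' ∈ range (i + 1), p j i' ≤ 1 := hR1 _ (hsubtop (i + 1) (by omega)) j hj
          rw [hsum1, hE] at hle
          have := hp0 j i
          have : p j i = 0 := by linarith
          exact hp this
        · intro j' hj' hje
          by_contra hge
          push_neg at hge
          have h5 : lam j' ≤ lam (n - 1 - i) := hlam j' (n - 1 - i) (by omega) (by omega)
          rw [hje] at h5
          rw [hμi] at hgt
          linarith
    · -- i ≥ ℓ, lam j > μ i = lam (k-1-i): bottom level m = i
      push_neg at hiℓ
      have hμi : μ i = lam (k - 1 - i) := by rw [hμ i hi, if_neg (by omega)]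
      have hE := ((hkfbot i hiℓ hi).2 (hH0 i hiℓ hi)).1 j hj ?_
      · have : p j i = 0 := by
          have := (Finset.sum_eq_zero_iff_of_nonneg (fun i' _ => hp0 j i')).mp hE i
            (Finset.mem_Ico.mpr ⟨le_rfl, hi⟩)
          exact this
        exact hp this
      · intro j' hj' hje
        by_contra hge
        push_neg at hge
        have h5 : lam j' ≤ lam (k - 1 - i) := hlam j' (k - 1 - i) (by omega) (by omega)
        rw [hje] at h5
        rw [hμi] at hgt
        linarith

lemma sum_range_dite {M : Type*} [AddCommMonoid M] (N : ℕ) (g : Fin N → M) :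
    ∑ j ∈ range N, (if h : j < N then g ⟨j, h⟩ else 0) = ∑ j : Fin N, g j := by
  rw [← Fin.sum_univ_eq_sum_range (fun j => if h : j < N then g ⟨j, h⟩ else 0) N]
  apply Finset.sum_congr rfl
  intro j _
  rw [dif_pos j.isLt]


end Helpers

open Finset in
set_option maxHeartbeats 2000000 in
/-- Corollary 2.2(a) of the paper: with `D` nonsingular and with distinct eigenvalues,
any maximizer `X_opt` of `trace (D Xᴴ A X)` subject to `Xᴴ B X = I` satisfies
`(X_opt Q)ᴴ A (X_opt Q) = diag(λ_n,…,λ_{n+1-ℓ}, λ_{k-ℓ},…,λ₁)`. -/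
theorem trace_max_posdef_B_maximizer
    (n k ℓ : ℕ) (hk : 1 ≤ k) (hkn : k ≤ n) (hℓ : ℓ ≤ k)
    (A B : Matrix (Fin n) (Fin n) ℂ) (hA : A.IsHermitian) (hB : B.PosDef)
    (U : Matrix (Fin n) (Fin n) ℂ) (hU : IsUnit U)
    (lam : Fin n → ℝ) (hlam : Monotone lam)
    (hUA : Uᴴ * A * U = Matrix.diagonal fun i => (lam i : ℂ))
    (hUB : Uᴴ * B * U = 1)
    (D : Matrix (Fin k) (Fin k) ℂ) (hD : D.IsHermitian)
    (Q : Matrix (Fin k) (Fin k) ℂ) (hQ : Qᴴ * Q = 1)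
    (ω : Fin k → ℝ) (hω : StrictAnti ω)
    (hQD : Qᴴ * D * Q = Matrix.diagonal fun i => (ω i : ℂ))
    (hωpos : ∀ i : Fin k, (i : ℕ) < ℓ → 0 < ω i)
    (hωneg : ∀ i : Fin k, ℓ ≤ (i : ℕ) → ω i < 0)
    (Xopt : Matrix (Fin n) (Fin k) ℂ)
    (hXopt : Xoptᴴ * B * Xopt = 1)
    (hmax : Matrix.trace (D * (Xoptᴴ * A * Xopt)) =
      ((∑ i : Fin k, ω i *
        (if (i : ℕ) < ℓ then lam ⟨n - 1 - (i : ℕ), by omega⟩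
         else lam ⟨k - 1 - (i : ℕ), by omega⟩) : ℝ) : ℂ)) :
    (Xopt * Q)ᴴ * A * (Xopt * Q) =
      Matrix.diagonal fun i : Fin k =>
        ((if (i : ℕ) < ℓ then lam ⟨n - 1 - (i : ℕ), by omega⟩
          else lam ⟨k - 1 - (i : ℕ), by omega⟩ : ℝ) : ℂ) := by
  classical
  have hdet : IsUnit U.det := (Matrix.isUnit_iff_isUnit_det U).mp hU
  have h1 : U * U⁻¹ = 1 := Matrix.mul_nonsing_inv U hdet
  have h2 : U⁻¹ * U = 1 := Matrix.nonsing_inv_mul U hdet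
  set Z : Matrix (Fin n) (Fin k) ℂ := U⁻¹ * (Xopt * Q) with hZ
  set Lam : Matrix (Fin n) (Fin n) ℂ := Matrix.diagonal (fun i => (lam i : ℂ)) with hLam
  set Om : Matrix (Fin k) (Fin k) ℂ := Matrix.diagonal (fun i => (ω i : ℂ)) with hOm
  set muF : Fin k → ℝ := fun i =>
    (if (i : ℕ) < ℓ then lam ⟨n - 1 - (i : ℕ), by omega⟩
     else lam ⟨k - 1 - (i : ℕ), by omega⟩) with hmuF
  have hXQ : Xopt * Q = U * Z := by
    rw [hZ, ← Matrix.mul_assoc, h1, Matrix.one_mul]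
  have hQ2 : Q * Qᴴ = 1 := mul_eq_one_comm.mp hQ
  -- sandwich identity
  have hsand : ∀ (M : Matrix (Fin n) (Fin n) ℂ),
      Zᴴ * (Uᴴ * M * U) * Z = Qᴴ * (Xoptᴴ * M * Xopt) * Q := by
    intro M
    have e1 : Zᴴ * (Uᴴ * M * U) * Z = (U * Z)ᴴ * M * (U * Z) := by
      rw [Matrix.conjTranspose_mul U Z]
      simp only [Matrix.mul_assoc]
    have e2 : (Xopt * Q)ᴴ * M * (Xopt * Q) = Qᴴ * (Xoptᴴ * M * Xopt) * Q := by
      rw [Matrix.conjTranspose_mul Xopt Q]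
      simp only [Matrix.mul_assoc]
    rw [e1, ← hXQ, e2]
  have hZZ : Zᴴ * Z = 1 := by
    have e1 : Zᴴ * Z = Zᴴ * (Uᴴ * B * U) * Z := by rw [hUB, Matrix.mul_one]
    rw [e1, hsand, hXopt]
    rw [Matrix.mul_one, hQ]
  have hgoal1 : (Xopt * Q)ᴴ * A * (Xopt * Q) = Zᴴ * Lam * Z := by
    have e2 : (Xopt * Q)ᴴ * A * (Xopt * Q) = Qᴴ * (Xoptᴴ * A * Xopt) * Q := by
      rw [Matrix.conjTranspose_mul Xopt Q]
      simp only [Matrix.mul_assoc]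
    rw [e2, ← hsand A, hUA]
  set M : Matrix (Fin k) (Fin k) ℂ := Zᴴ * Lam * Z with hM
  -- trace rewriting
  have hsandQ : ∀ (Mk : Matrix (Fin k) (Fin k) ℂ), Q * (Qᴴ * Mk * Q) * Qᴴ = Mk := by
    intro Mk
    have e1 : Q * (Qᴴ * Mk * Q) * Qᴴ = (Q * Qᴴ) * Mk * (Q * Qᴴ) := by simp only [Matrix.mul_assoc]
    rw [e1, hQ2, Matrix.one_mul, Matrix.mul_one]
  have hXAX : Xoptᴴ * A * Xopt = Q * M * Qᴴ := by
    have e1 : Qᴴ * (Xoptᴴ * A * Xopt) * Q = M := by rw [← hsand A, hUA]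
    rw [← e1, hsandQ]
  have hDval : D = Q * Om * Qᴴ := by
    rw [← hQD, hsandQ]
  have htr : Matrix.trace (D * (Xoptᴴ * A * Xopt)) = Matrix.trace (Om * M) := by
    rw [hDval, hXAX]
    have e1 : Q * Om * Qᴴ * (Q * M * Qᴴ) = Q * (Om * M) * Qᴴ := by
      have e2 : Q * Om * Qᴴ * (Q * M * Qᴴ) = Q * Om * (Qᴴ * Q) * (M * Qᴴ) := by simp only [Matrix.mul_assoc]
      rw [e2, hQ, Matrix.mul_one]
      simp only [Matrix.mul_assoc]
    rw [e1, Matrix.trace_mul_comm, ← Matrix.mul_assoc, hQ, Matrix.one_mul]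
  -- entries of M
  have hsz : ∀ z : ℂ, star z * z = ((Complex.normSq z : ℝ) : ℂ) := by
    intro z
    rw [mul_comm]
    exact Complex.mul_conj z
  have hsz' : ∀ z : ℂ, z * star z = ((Complex.normSq z : ℝ) : ℂ) := fun z => Complex.mul_conj z
  have hMentry : ∀ (i i' : Fin k), M i i' = ∑ j : Fin n, (lam j : ℂ) * (star (Z j i) * Z j i') := by
    intro i i'
    rw [hM, Matrix.mul_assoc, Matrix.mul_apply]
    apply Finset.sum_congr rfl
    intro j _
    rw [Matrix.conjTranspose_apply, hLam, Matrix.diagonal_mul]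
    ring
  have hMii : ∀ i : Fin k, M i i = ((∑ j : Fin n, lam j * Complex.normSq (Z j i) : ℝ) : ℂ) := by
    intro i
    rw [hMentry i i]
    rw [Complex.ofReal_sum]
    apply Finset.sum_congr rfl
    intro j _
    rw [Complex.ofReal_mul, hsz]
  -- real trace equation
  set dR : Fin k → ℝ := fun i => ∑ j : Fin n, lam j * Complex.normSq (Z j i) with hdR
  have htrsum : Matrix.trace (Om * M) = ((∑ i : Fin k, ω i * dR i : ℝ) : ℂ) := by
    rw [Matrix.trace, Complex.ofReal_sum]
    apply Finset.sum_congr rfl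
    intro i _
    rw [Matrix.diag, Matrix.diagonal_mul, hMii i, Complex.ofReal_mul]
  have hreal : ∑ i : Fin k, ω i * dR i = ∑ i : Fin k, ω i * muF i := by
    have := hmax
    rw [htr, htrsum] at this
    exact_mod_cast this
  -- column sums
  have hcolF : ∀ i : Fin k, ∑ j : Fin n, Complex.normSq (Z j i) = 1 := by
    intro i
    have e1 : (Zᴴ * Z) i i = (1 : Matrix (Fin k) (Fin k) ℂ) i i := by rw [hZZ]
    rw [Matrix.mul_apply, Matrix.one_apply_eq] at e1
    have e2 : ∑ j : Fin n, Zᴴ i j * Z j i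
        = ((∑ j : Fin n, Complex.normSq (Z j i) : ℝ) : ℂ) := by
      rw [Complex.ofReal_sum]
      apply Finset.sum_congr rfl
      intro j _
      rw [Matrix.conjTranspose_apply, hsz]
    rw [e2] at e1
    exact_mod_cast e1
  -- row sums
  have hrowF : ∀ j : Fin n, ∑ i : Fin k, Complex.normSq (Z j i) ≤ 1 := by
    intro j
    set W : Matrix (Fin n) (Fin n) ℂ := Z * Zᴴ with hW
    have hWW : W * W = W := by
      have e1 : W * W = Z * ((Zᴴ * Z) * Zᴴ) := by rw [hW]; simp only [Matrix.mul_assoc]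
      rw [e1, hZZ, Matrix.one_mul, hW]
    have hWH : Wᴴ = W := by
      rw [hW, Matrix.conjTranspose_mul, Matrix.conjTranspose_conjTranspose]
    set t : ℝ := ∑ i : Fin k, Complex.normSq (Z j i) with htt
    have ht0 : 0 ≤ t := Finset.sum_nonneg fun i _ => Complex.normSq_nonneg _
    have hWjj : W j j = (t : ℂ) := by
      rw [hW, Matrix.mul_apply, htt, Complex.ofReal_sum]
      apply Finset.sum_congr rfl
      intro i _
      rw [Matrix.conjTranspose_apply, hsz']
    have e3 : W j j = ∑ l : Fin n, W j l * W l j := by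
      conv_lhs => rw [← hWW]
      rw [Matrix.mul_apply]
    have e4 : ∀ l : Fin n, W l j = star (W j l) := by
      intro l
      conv_lhs => rw [← hWH]
      rw [Matrix.conjTranspose_apply]
    have e5 : W j j = ((∑ l : Fin n, Complex.normSq (W j l) : ℝ) : ℂ) := by
      rw [e3, Complex.ofReal_sum]
      apply Finset.sum_congr rfl
      intro l _
      rw [e4 l, hsz']
    have e6 : t = ∑ l : Fin n, Complex.normSq (W j l) := by
      have := hWjj.symm.trans e5
      exact_mod_cast this
    have e7 : Complex.normSq (W j j) ≤ ∑ l : Fin n, Complex.normSq (W j l) :=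
      Finset.single_le_sum (fun l _ => Complex.normSq_nonneg _) (Finset.mem_univ j)
    rw [hWjj, Complex.normSq_ofReal, ← e6] at e7
    nlinarith
  -- apply core
  set lamN : ℕ → ℝ := fun j => if h : j < n then lam ⟨j, h⟩ else 0 with hlamN
  set ωN : ℕ → ℝ := fun i => if h : i < k then ω ⟨i, h⟩ else 0 with hωN
  set pN : ℕ → ℕ → ℝ := fun j i =>
    if h : j < n ∧ i < k then Complex.normSq (Z ⟨j, h.1⟩ ⟨i, h.2⟩) else 0 with hpN
  set μN : ℕ → ℝ := fun i => if i < ℓ then lamN (n - 1 - i) else lamN (k - 1 - i) with hμN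
  have hlamN' : ∀ (j : ℕ) (h : j < n), lamN j = lam ⟨j, h⟩ := by
    intro j h
    simp only [hlamN]
    rw [dif_pos h]
  have hωN' : ∀ (i : ℕ) (h : i < k), ωN i = ω ⟨i, h⟩ := by
    intro i h
    simp only [hωN]
    rw [dif_pos h]
  have hpN' : ∀ (j i : ℕ) (hj : j < n) (hi : i < k),
      pN j i = Complex.normSq (Z ⟨j, hj⟩ ⟨i, hi⟩) := by
    intro j i hj hi
    simp only [hpN]
    rw [dif_pos ⟨hj, hi⟩]
  have hpNn : ∀ j i, 0 ≤ pN j i := by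
    intro j i
    simp only [hpN]
    by_cases h : j < n ∧ i < k
    · rw [dif_pos h]; exact Complex.normSq_nonneg _
    · rw [dif_neg h]
  have hμN' : ∀ (i : ℕ) (h : i < k), μN i = muF ⟨i, h⟩ := by
    intro i h
    simp only [hμN, hmuF]
    by_cases hc : i < ℓ
    · rw [if_pos hc, if_pos hc, hlamN' _ (by omega : n - 1 - i < n)]
    · rw [if_neg hc, if_neg hc, hlamN' _ (by omega : k - 1 - i < n)]
  have hkey := core n k ℓ hk hkn hℓ lamN
    (by
      intro i j hij hj
      rw [hlamN' i (by omega), hlamN' j hj]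
      exact hlam (Fin.mk_le_mk.mpr hij))
    ωN
    (by
      intro i j hij hj
      rw [hωN' i (by omega), hωN' j hj]
      exact hω (Fin.mk_lt_mk.mpr hij))
    (by
      intro i hi
      rw [hωN' i (by omega)]
      exact hωpos ⟨i, by omega⟩ hi)
    (by
      intro i h1' h2'
      rw [hωN' i h2']
      exact hωneg ⟨i, h2'⟩ h1')
    pN hpNn
    (by
      intro i hi
      calc ∑ j ∈ range n, pN j i
          = ∑ j ∈ range n, (if h : j < n then Complex.normSq (Z ⟨j, h⟩ ⟨i, hi⟩) else 0) := by
            apply Finset.sum_congr rfl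
            intro j hj
            rw [dif_pos (Finset.mem_range.mp hj), hpN' j i (Finset.mem_range.mp hj) hi]
        _ = ∑ j : Fin n, Complex.normSq (Z j ⟨i, hi⟩) :=
              sum_range_dite n (fun x : Fin n => Complex.normSq (Z x ⟨i, hi⟩))
        _ = 1 := hcolF ⟨i, hi⟩)
    (by
      intro j hj
      have e1 : ∑ i ∈ range k, pN j i = ∑ i : Fin k, Complex.normSq (Z ⟨j, hj⟩ i) := by
        calc ∑ i ∈ range k, pN j i
            = ∑ i ∈ range k, (if h : i < k then Complex.normSq (Z ⟨j, hj⟩ ⟨i, h⟩) else 0) := by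
              apply Finset.sum_congr rfl
              intro i hi
              rw [dif_pos (Finset.mem_range.mp hi), hpN' j i hj (Finset.mem_range.mp hi)]
          _ = ∑ i : Fin k, Complex.normSq (Z ⟨j, hj⟩ i) :=
                sum_range_dite k (fun x : Fin k => Complex.normSq (Z ⟨j, hj⟩ x))
      rw [e1]
      exact hrowF ⟨j, hj⟩)
    μN
    (by intro i _; rfl)
    (by
      have e1 : ∀ (i : ℕ) (h : i < k),
          (∑ j ∈ range n, lamN j * pN j i) = dR ⟨i, h⟩ := by
        intro i h
        calc ∑ j ∈ range n, lamN j * pN j i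
            = ∑ j ∈ range n, (if hj : j < n then lam ⟨j, hj⟩ * Complex.normSq (Z ⟨j, hj⟩ ⟨i, h⟩) else 0) := by
              apply Finset.sum_congr rfl
              intro j hj
              have hj2 := Finset.mem_range.mp hj
              rw [dif_pos hj2, hlamN' j hj2, hpN' j i hj2 h]
          _ = ∑ j : Fin n, lam j * Complex.normSq (Z j ⟨i, h⟩) :=
                sum_range_dite n (fun x : Fin n => lam x * Complex.normSq (Z x ⟨i, h⟩))
          _ = dR ⟨i, h⟩ := rfl
      calc ∑ i ∈ range k, ωN i * (∑ j ∈ range n, lamN j * pN j i)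
          = ∑ i ∈ range k, (if h : i < k then ω ⟨i, h⟩ * dR ⟨i, h⟩ else 0) := by
            apply Finset.sum_congr rfl
            intro i hi
            have hi2 := Finset.mem_range.mp hi
            rw [dif_pos hi2, e1 i hi2, hωN' i hi2]
        _ = ∑ i : Fin k, ω i * dR i := sum_range_dite k (fun x : Fin k => ω x * dR x)
        _ = ∑ i : Fin k, ω i * muF i := hreal
        _ = ∑ i ∈ range k, (if h : i < k then ω ⟨i, h⟩ * muF ⟨i, h⟩ else 0) :=
              (sum_range_dite k (fun x : Fin k => ω x * muF x)).symm
        _ = ∑ i ∈ range k, ωN i * μN i := by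
            apply Finset.sum_congr rfl
            intro i hi
            have hi2 := Finset.mem_range.mp hi
            rw [dif_pos hi2, hωN' i hi2, hμN' i hi2])
  -- eigenvector relation
  have hZkey : ∀ (j : Fin n) (i : Fin k), Z j i ≠ 0 → lam j = muF i := by
    intro j i hZji
    have hpne : pN (j : ℕ) (i : ℕ) ≠ 0 := by
      rw [hpN' _ _ j.isLt i.isLt]
      simp only [Fin.eta]
      exact fun hc => hZji (Complex.normSq_eq_zero.mp hc)
    have h9 := hkey (j : ℕ) j.isLt (i : ℕ) i.isLt hpne
    rw [hlamN' _ j.isLt, hμN' _ i.isLt] at h9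
    simpa using h9
  have hLZ : Lam * Z = Z * Matrix.diagonal (fun i : Fin k => (muF i : ℂ)) := by
    ext j i
    rw [hLam, Matrix.diagonal_mul, Matrix.mul_diagonal]
    by_cases hz : Z j i = 0
    · rw [hz, mul_zero, zero_mul]
    · rw [hZkey j i hz]
      ring
  rw [hgoal1, hM]
  rw [Matrix.mul_assoc, hLZ, ← Matrix.mul_assoc, hZZ, Matrix.one_mul]
end
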